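/- Let k ≥ 3 be an integer, let a be a real number with 0 < a < 4, and let α be a real number with 0 < α ≤ 2. Then the following three inequalities hold simultaneously: (i) (k−2)/(k−1) < α < 2/√(k−1), (ii) 0 < a ≤ 4 − (4(k−2))/((k−1)α), (iii) a < (4−(k−1)α²)/(k−α(k−1)); if and only if the following two conditions hold simultaneously: (iv) (4/(4−a))·(1/α) ≤ (k−1)/(k−2), and (v) the symmetric 3×3 real matrix G(a,α,k) with rows [1/k + α/k − α/k² + 1/a − 1, (α/2)(1 − 2/k), 1/2 − 1/a], [(α/2)(1 − 2/k), k/(k−1) − α, 0], [1/2 − 1/a, 0, 1/a] is positive definite. -/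

import Mathlib

/-!
`G(a,α,k)` is an arrowhead matrix (its `(2,3)` entry vanishes), so completing the squares in the
second and third variables shows that it is positive definite exactly when `G₂₂ > 0`, `G₃₃ > 0`
and `det G > 0`. Up to positive factors these are `k - α(k-1) > 0`, `a > 0` and
`4 - (k-1)α² - a(k - α(k-1)) > 0`. After clearing denominators, (ii) and (iv) are the same
inequality, (iii) is the determinant condition once `k - α(k-1) > 0`, and the latter follows from
`α² (k-1) < 4` because `k ≥ 2√(k-1)`.
-/

open scoped Matrix

noncomputable def Gmat (a α : ℝ) (k : ℕ) : Matrix (Fin 3) (Fin 3) ℝ :=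
  !![1 / (k : ℝ) + α / (k : ℝ) - α / (k : ℝ) ^ 2 + 1 / a - 1,
      (α / 2) * (1 - 2 / (k : ℝ)), 1 / 2 - 1 / a;
    (α / 2) * (1 - 2 / (k : ℝ)), (k : ℝ) / ((k : ℝ) - 1) - α, 0;
    1 / 2 - 1 / a, 0, 1 / a]

namespace Matrix

theorem det_arrowhead {R : Type*} [CommRing R] (p q r s t : R) :
    !![p, q, r; q, s, 0; r, 0, t].det = p * s * t - q ^ 2 * t - r ^ 2 * s := by
  rw [det_fin_three]
  simp only [Fin.isValue, of_apply, cons_val', cons_val_zero, cons_val_fin_one, cons_val_one,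
    cons_val, mul_zero, sub_zero, zero_mul, add_zero]
  ring

theorem posDef_arrowhead_iff {p q r s t : ℝ} :
    !![p, q, r; q, s, 0; r, 0, t].PosDef ↔
      0 < s ∧ 0 < t ∧ 0 < p * s * t - q ^ 2 * t - r ^ 2 * s := by
  refine ⟨fun h ↦ ⟨by simpa using h.diag_pos (i := 1), by simpa using h.diag_pos (i := 2),
    det_arrowhead p q r s t ▸ h.det_pos⟩, ?_⟩
  rintro ⟨hs, ht, hdet⟩
  refine posDef_iff_dotProduct_mulVec.mpr ⟨?_, fun x hx ↦ ?_⟩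
  · ext i j
    fin_cases i <;> fin_cases j <;> rfl
  have hform : s * t * (star x ⬝ᵥ !![p, q, r; q, s, 0; r, 0, t] *ᵥ x) =
      t * (s * x 1 + q * x 0) ^ 2 + s * (t * x 2 + r * x 0) ^ 2 +
        (p * s * t - q ^ 2 * t - r ^ 2 * s) * x 0 ^ 2 := by
    simp only [dotProduct, Pi.star_apply, star_trivial, mulVec, of_apply, cons_val',
      cons_val_fin_one, Fin.sum_univ_three, Fin.isValue, cons_val_zero, cons_val_one, cons_val,
      zero_mul, add_zero]
    ring
  have n₀ : 0 ≤ (p * s * t - q ^ 2 * t - r ^ 2 * s) * x 0 ^ 2 := by positivity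
  have n₁ : 0 ≤ t * (s * x 1 + q * x 0) ^ 2 := by positivity
  have n₂ : 0 ≤ s * (t * x 2 + r * x 0) ^ 2 := by positivity
  have hpos : 0 < t * (s * x 1 + q * x 0) ^ 2 + s * (t * x 2 + r * x 0) ^ 2 +
      (p * s * t - q ^ 2 * t - r ^ 2 * s) * x 0 ^ 2 := by
    by_contra! hle
    have h₀ : x 0 = 0 := by
      have : (p * s * t - q ^ 2 * t - r ^ 2 * s) * x 0 ^ 2 = 0 := by linarith
      simpa [hdet.ne'] using this
    have h₁ : x 1 = 0 := by
      have : t * (s * x 1 + q * x 0) ^ 2 = 0 := by linarith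
      simpa [h₀, hs.ne', ht.ne'] using this
    have h₂ : x 2 = 0 := by
      have : s * (t * x 2 + r * x 0) ^ 2 = 0 := by linarith
      simpa [h₀, hs.ne', ht.ne'] using this
    exact hx (by ext i; fin_cases i <;> assumption)
  exact pos_of_mul_pos_right (hform ▸ hpos) (by positivity)

end Matrix

theorem gmat_posDef_iff {a α : ℝ} {k : ℕ} (hk : 1 < k) (ha : 0 < a) :
    (Gmat a α k).PosDef ↔
      0 < k - α * (k - 1) ∧ 0 < 4 - (k - 1) * α ^ 2 - a * (k - α * (k - 1)) := by
  have hK1 : 0 < (k : ℝ) - 1 := by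
    have : (1 : ℝ) < k := by exact_mod_cast hk
    linarith
  have hG₂₂ : (k : ℝ) / (k - 1) - α = (k - α * (k - 1)) / (k - 1) := by
    field_simp
  have hdet : ((1 / (k : ℝ) + α / k - α / k ^ 2 + 1 / a - 1) * (k / (k - 1) - α) * (1 / a) -
      (α / 2 * (1 - 2 / k)) ^ 2 * (1 / a) - (1 / 2 - 1 / a) ^ 2 * (k / (k - 1) - α)) =
      (4 - (k - 1) * α ^ 2 - a * (k - α * (k - 1))) / (4 * a * (k - 1)) := by
    field_simp
    ring
  rw [Gmat, Matrix.posDef_arrowhead_iff, hdet, hG₂₂, div_pos_iff_of_pos_right hK1,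
    div_pos_iff_of_pos_right (by positivity : 0 < 4 * a * ((k : ℝ) - 1))]
  simp [ha]

theorem lt_div_sqrt_iff {x b c : ℝ} (hx : 0 ≤ x) (hb : 0 < b) (hc : 0 < c) :
    x < b / √c ↔ x ^ 2 * c < b ^ 2 := by
  rw [lt_div_iff₀ (Real.sqrt_pos.2 hc), ← pow_lt_pow_iff_left₀ (by positivity) hb.le two_ne_zero,
    mul_pow, Real.sq_sqrt hc.le]

/-- This is `k ≥ 2 √(k - 1)` in disguise. -/
theorem mul_sub_one_lt_of_sq_mul_sub_one_lt_four {k α : ℝ} (hk : 1 < k)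
    (h : α ^ 2 * (k - 1) < 4) : α * (k - 1) < k := by
  nlinarith [sq_nonneg (k - 2)]

theorem statement7_general (k : ℕ) (hk : 3 ≤ k) (a α : ℝ)
    (ha0 : 0 < a) (ha4 : a < 4) (hα0 : 0 < α) :
    ((((k : ℝ) - 2) / ((k : ℝ) - 1) < α ∧ α < 2 / Real.sqrt ((k : ℝ) - 1)) ∧
      (0 < a ∧ a ≤ 4 - (4 * ((k : ℝ) - 2)) / (((k : ℝ) - 1) * α)) ∧
      a < (4 - ((k : ℝ) - 1) * α ^ 2) / ((k : ℝ) - α * ((k : ℝ) - 1)))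
    ↔
    ((4 / (4 - a)) * (1 / α) ≤ ((k : ℝ) - 1) / ((k : ℝ) - 2) ∧
      (Gmat a α k).PosDef) := by
  rw [gmat_posDef_iff (by omega) ha0]
  have hK : (3 : ℝ) ≤ k := by exact_mod_cast hk
  set K : ℝ := (k : ℝ)
  have hK1 : 0 < K - 1 := by linarith
  have hii : a ≤ 4 - 4 * (K - 2) / ((K - 1) * α) ↔ 4 * (K - 2) ≤ (4 - a) * ((K - 1) * α) := by
    rw [le_sub_comm, div_le_iff₀ (by positivity)]
  have hiv : 4 / (4 - a) * (1 / α) ≤ (K - 1) / (K - 2) ↔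
      4 * (K - 2) ≤ (4 - a) * ((K - 1) * α) := by
    rw [div_mul_div_comm, div_le_div_iff₀ (by nlinarith) (by linarith), mul_one, mul_comm 4, mul_left_comm (K - 1)]
  have hsqrt : α < 2 / √(K - 1) ↔ α ^ 2 * (K - 1) < 4 := by
    rw [lt_div_sqrt_iff hα0.le two_pos hK1]
    norm_num
  rw [hii, hiv, hsqrt]
  constructor
  · rintro ⟨⟨-, hsq⟩, ⟨-, hcond⟩, hiii⟩
    have hs : 0 < K - α * (K - 1) := by
      linarith [mul_sub_one_lt_of_sq_mul_sub_one_lt_four (by linarith) hsq]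
    rw [lt_div_iff₀ hs] at hiii
    exact ⟨hcond, hs, by linarith⟩
  · rintro ⟨hcond, hs, hdet⟩
    refine ⟨⟨?_, by nlinarith [mul_pos ha0 hs]⟩, ⟨ha0, hcond⟩, ?_⟩
    · rw [div_lt_iff₀ hK1]
      nlinarith [mul_pos (mul_pos ha0 hα0) hK1]
    · rw [lt_div_iff₀ hs]
      linarith

/-- For an integer `k ≥ 3` and reals `0 < a < 4`, `0 < α ≤ 2`, the three
inequalities `(k−2)/(k−1) < α < 2/√(k−1)`, `0 < a ≤ 4 − 4(k−2)/((k−1)α)` and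
`a < (4−(k−1)α²)/(k−α(k−1))` hold simultaneously if and only if
`(4/(4−a))·(1/α) ≤ (k−1)/(k−2)` and the matrix `G(a,α,k)` is positive definite. -/
theorem statement7 (k : ℕ) (hk : 3 ≤ k) (a α : ℝ)
    (ha0 : 0 < a) (ha4 : a < 4) (hα0 : 0 < α) (hα2 : α ≤ 2) :
    ((((k : ℝ) - 2) / ((k : ℝ) - 1) < α ∧ α < 2 / Real.sqrt ((k : ℝ) - 1)) ∧
      (0 < a ∧ a ≤ 4 - (4 * ((k : ℝ) - 2)) / (((k : ℝ) - 1) * α)) ∧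
      a < (4 - ((k : ℝ) - 1) * α ^ 2) / ((k : ℝ) - α * ((k : ℝ) - 1)))
    ↔
    ((4 / (4 - a)) * (1 / α) ≤ ((k : ℝ) - 1) / ((k : ℝ) - 2) ∧
      (Gmat a α k).PosDef) :=
  statement7_general k hk a α ha0 ha4 hα0
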